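/- arXiv:math/0304038 — 2 statements merged into one kernel-verified Lean document; each statement's English description precedes it below -/
import Mathlib

section
/- Let L be a Lie superalgebra over R, let P : L → L be an R-linear parity-preserving projector whose image V = P(L) is an abelian subalgebra and which satisfies the distributive law, and let Δ ∈ L be an odd element. Then for every n ≥ 0 and all homogeneous elements a₁,…,aₙ ∈ V, the n-th Jacobiator of the higher derived brackets of Δ equals the n-th derived bracket of Δ²: Jⁿ_Δ(a₁,…,aₙ) = {a₁,…,aₙ}_{Δ²}. -/
/-!
Write `Δ_S` for `Δ` bracketed successively with the `a_i`, `i ∈ S`. Since bracketing with a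
homogeneous element from the right is a graded derivation, bracketing `[Δ, Δ]` with
`a₁, …, aₙ` gives a signed sum of the `[Δ_S, Δ_{Sᶜ}]` over all subsets `S`. By the distributive
law, `P [Δ_S, Δ_{Sᶜ}] = P [P Δ_S, Δ_{Sᶜ}] + P [Δ_S, P Δ_{Sᶜ}]`. The `a_i` lie in the abelian
subalgebra `V`, so they commute with `P Δ_S`. Hence `P Δ_S` can be moved to the front, and each
summand becomes a Jacobiator term `{{a_S}, a_{Sᶜ}}` or `{{a_{Sᶜ}}, a_S}`, with its Koszul sign. So
every Jacobiator term occurs exactly twice, once from `S` and once from `Sᶜ`, which absorbs the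
factor `1/2` of `Δ²`.
-/

open Finset

/-- The sign `(-1)^e` for a parity `e : ZMod 2`, as an element of `R`. -/
def sgn (R : Type*) [CommRing R] (e : ZMod 2) : R := if e = 0 then 1 else -1

variable {R : Type*} [CommRing R] {L : Type*} [AddCommGroup L] [Module R L]

/-- Iterated bracket `[...[[z,a₁],a₂],...,aₙ]`. -/
def iterBr (br : L →ₗ[R] L →ₗ[R] L) : L → List L → L
  | z, [] => z
  | z, a :: rest => iterBr br (br z a) rest

/-- The `n`-th higher derived bracket `{a₁,...,aₙ}_Δ := P [...[[Δ,a₁],a₂],...,aₙ]`. -/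
def dbr (br : L →ₗ[R] L →ₗ[R] L) (P : L →ₗ[R] L) (Δ : L) (n : ℕ) (a : Fin n → L) : L :=
  P (iterBr br Δ (List.ofFn a))

/-- The exponent of the Koszul sign of the `(k,l)`-shuffle determined by the
`k`-element subset `S ⊆ {0,...,n-1}` on homogeneous arguments of parities `p i`:
a factor `(-1)^{p i · p j}` for each pair `i < j` with `i ∉ S`, `j ∈ S`. -/
def koszulExp {n : ℕ} (p : Fin n → ZMod 2) (S : Finset (Fin n)) : ZMod 2 :=
  ∑ j ∈ S, ∑ i ∈ Sᶜ.filter (fun i => i < j), p i * p j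

/-- The `n`-th Jacobiator
`Jⁿ(a₁,…,aₙ) = Σ_{k+l=n} Σ_{(k,l)-shuffles σ} (−1)^α {{a_{σ(1)},…,a_{σ(k)}}, a_{σ(k+1)},…,a_{σ(n)}}`
of a family of `n`-ary operations, the sum over `(k,l)`-shuffles being realized as a sum
over the `k`-element subsets `S` of indices (listed in increasing order inside each group),
with `(−1)^α` the Koszul sign of the shuffle on arguments of parities `p i`. -/
def Jac (R : Type*) [CommRing R] {M : Type*} [AddCommGroup M] [Module R M]
    (br : ∀ n : ℕ, (Fin n → M) → M) (n : ℕ) (p : Fin n → ZMod 2) (a : Fin n → M) : M :=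
  ∑ S : Finset (Fin n),
    sgn R (koszulExp p S) •
      br (Sᶜ.card + 1)
        (Fin.cons (br S.card (fun i => a ((S.orderIsoOfFin rfl i : Fin n))))
          (fun i => a ((Sᶜ.orderIsoOfFin rfl i : Fin n))))

lemma sgn_zero : sgn R 0 = 1 := rfl

lemma sgn_one : sgn R 1 = -1 := rfl

lemma sgn_add (x y : ZMod 2) : sgn R (x + y) = sgn R x * sgn R y := by
  have h01 : ∀ x : ZMod 2, x = 0 ∨ x = 1 := by decide
  obtain rfl | rfl := h01 x <;> obtain rfl | rfl := h01 y <;>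
    simp [sgn, show (1 + 1 : ZMod 2) = 0 from rfl]

section Inversions

variable {ι : Type*} [LinearOrder ι] (p : ι → ZMod 2)

/-- The exponent of the Koszul sign of listing the indices in `T` before those in `U`;
`koszulExp p S = inversionExp p S Sᶜ`. -/
def inversionExp (T U : Finset ι) : ZMod 2 :=
  ∑ j ∈ T, ∑ i ∈ U with i < j, p i * p j

lemma inversionExp_insert_left {T U : Finset ι} {m : ι} (hm : m ∉ T) (hU : ∀ i ∈ U, m < i) :
    inversionExp p (insert m T) U = inversionExp p T U := by
  rw [inversionExp, sum_insert hm, filter_false_of_mem fun i hi => (hU i hi).not_gt,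
    sum_empty, zero_add, inversionExp]

lemma inversionExp_insert_right {T U : Finset ι} {m : ι} (hm : m ∉ U) (hT : ∀ j ∈ T, m < j) :
    inversionExp p T (insert m U) = inversionExp p T U + p m * ∑ j ∈ T, p j := by
  rw [inversionExp, inversionExp, mul_sum, ← sum_add_distrib]
  refine sum_congr rfl fun j hj => ?_
  rw [filter_insert, if_pos (hT j hj), sum_insert fun h => hm (mem_of_mem_filter m h)]
  ring

lemma inversionExp_add_inversionExp_swap {T U : Finset ι} (hTU : Disjoint T U) :
    inversionExp p T U + inversionExp p U T = (∑ i ∈ T, p i) * ∑ j ∈ U, p j := by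
  have hsplit : ∀ j ∈ T, ∑ i ∈ U, p j * p i
      = ∑ i ∈ U with i < j, p i * p j + ∑ i ∈ U with j < i, p j * p i := by
    intro j hj
    rw [← sum_filter_add_sum_filter_not U (· < j)]
    congr 1
    · exact sum_congr rfl fun _ _ => mul_comm _ _
    · refine sum_congr (filter_congr fun i hi => ?_) fun _ _ => rfl
      have hij : j ≠ i := fun h => disjoint_left.mp hTU hj (h ▸ hi)
      exact not_lt.trans hij.le_iff_lt
  rw [sum_mul_sum, sum_congr rfl hsplit, sum_add_distrib, inversionExp, inversionExp]
  congr 1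
  exact sum_comm' fun j i => by simp only [mem_filter]; tauto

end Inversions

section IteratedBracket

variable (br : L →ₗ[R] L →ₗ[R] L)

lemma iterBr_add (z w : L) (l : List L) :
    iterBr br (z + w) l = iterBr br z l + iterBr br w l := by
  induction l generalizing z w with
  | nil => rfl
  | cons b l ih => simp only [iterBr, map_add, LinearMap.add_apply, ih]

lemma iterBr_smul (c : R) (z : L) (l : List L) :
    iterBr br (c • z) l = c • iterBr br z l := by
  induction l generalizing z with
  | nil => rfl
  | cons b l ih => simp only [iterBr, map_smul, LinearMap.smul_apply, ih]

variable {ι : Type*} [LinearOrder ι]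

/-- `[...[[z, a_{s₁}], a_{s₂}], ..., a_{s_k}]` for `S = {s₁ < ... < s_k}`. -/
def iterBrOn (z : L) (a : ι → L) (S : Finset ι) : L :=
  iterBr br z ((S.sort (· ≤ ·)).map a)

variable {br}

@[simp]
lemma iterBrOn_empty (z : L) (a : ι → L) : iterBrOn br z a ∅ = z := by
  simp [iterBrOn, iterBr]

lemma iterBrOn_insert_of_lt {z : L} {a : ι → L} {S : Finset ι} {m : ι} (hm : ∀ i ∈ S, m < i) :
    iterBrOn br z a (insert m S) = iterBrOn br (br z (a m)) a S := by
  rw [iterBrOn, sort_insert _ (fun i hi => (hm i hi).le) fun h => (hm m h).false]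
  rfl

lemma iterBrOn_add (z w : L) (a : ι → L) (S : Finset ι) :
    iterBrOn br (z + w) a S = iterBrOn br z a S + iterBrOn br w a S :=
  iterBr_add br z w _

lemma iterBrOn_smul (c : R) (z : L) (a : ι → L) (S : Finset ι) :
    iterBrOn br (c • z) a S = c • iterBrOn br z a S :=
  iterBr_smul br c z _

end IteratedBracket

structure IsLieSuperBracket (grading : ZMod 2 → Submodule R L) (br : L →ₗ[R] L →ₗ[R] L) :
    Prop where
  br_mem {i j : ZMod 2} {a b : L} : a ∈ grading i → b ∈ grading j → br a b ∈ grading (i + j)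
  skew {i j : ZMod 2} {a b : L} : a ∈ grading i → b ∈ grading j →
    br a b = (-(sgn R (i * j))) • br b a
  jacobi {i j : ZMod 2} {a b : L} (c : L) : a ∈ grading i → b ∈ grading j →
    br a (br b c) = br (br a b) c + (sgn R (i * j)) • br b (br a c)

namespace IsLieSuperBracket

variable {grading : ZMod 2 → Submodule R L} {br : L →ₗ[R] L →ₗ[R] L}
  {ι : Type*} [LinearOrder ι] {p : ι → ZMod 2} {a : ι → L}

lemma iterBrOn_mem (hL : IsLieSuperBracket grading br) (ha : ∀ i, a i ∈ grading (p i))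
    (S : Finset ι) {z : L} {ζ : ZMod 2} (hz : z ∈ grading ζ) :
    iterBrOn br z a S ∈ grading (ζ + ∑ i ∈ S, p i) := by
  induction S using Finset.induction_on_min generalizing z ζ with
  | empty => simpa using hz
  | insert m S hm ih =>
    rw [iterBrOn_insert_of_lt hm, sum_insert fun h => (hm m h).false, ← add_assoc]
    exact ih (hL.br_mem hz (ha m))

lemma leibniz_right (hL : IsLieSuperBracket grading br) {x y γ : ZMod 2} {X Y c : L}
    (hX : X ∈ grading x) (hY : Y ∈ grading y) (hc : c ∈ grading γ) :
    br (br X Y) c = sgn R (γ * y) • br (br X c) Y + br X (br Y c) := by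
  have h := hL.jacobi Y hc hX
  rw [hL.skew hc hX, hL.skew hc hY, map_smul, LinearMap.smul_apply, map_smul, smul_smul] at h
  rw [hL.skew (hL.br_mem hX hY) hc, h, smul_add, smul_smul, smul_smul, neg_mul_neg,
    mul_neg, neg_mul_neg, ← sgn_add, ← sgn_add, ← sgn_add]
  rw [show (x + y) * γ + γ * x = γ * y by grind,
    show (x + y) * γ + (γ * x + γ * y) = 0 by grind, sgn_zero, one_smul]

lemma br_br_swap_of_br_eq_zero (hL : IsLieSuperBracket grading br) {ζ β γ : ZMod 2} {z w c : L}
    (hz : z ∈ grading ζ) (hw : w ∈ grading β) (hc : c ∈ grading γ) (hcw : br c w = 0) :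
    br (br z w) c = sgn R (γ * β) • br (br z c) w := by
  rw [hL.leibniz_right hz hw hc, hL.skew hw hc, hcw, smul_zero, map_zero, add_zero]

lemma iterBrOn_br_of_br_eq_zero (hL : IsLieSuperBracket grading br)
    (ha : ∀ i, a i ∈ grading (p i)) {β : ZMod 2} {w : L} (hw : w ∈ grading β)
    (hcomm : ∀ i, br (a i) w = 0) (S : Finset ι) {z : L} {ζ : ZMod 2} (hz : z ∈ grading ζ) :
    iterBrOn br (br z w) a S = sgn R ((∑ i ∈ S, p i) * β) • br (iterBrOn br z a S) w := by
  induction S using Finset.induction_on_min generalizing z ζ with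
  | empty => simp [sgn_zero]
  | insert m S hm ih =>
    rw [iterBrOn_insert_of_lt hm, iterBrOn_insert_of_lt hm,
      hL.br_br_swap_of_br_eq_zero hz hw (ha m) (hcomm m), iterBrOn_smul,
      ih (hL.br_mem hz (ha m)), smul_smul, ← sgn_add, sum_insert fun h => (hm m h).false,
      add_mul]

lemma iterBrOn_br_eq_sum_powerset (hL : IsLieSuperBracket grading br)
    (ha : ∀ i, a i ∈ grading (p i)) (S : Finset ι) {x y : ZMod 2} {X Y : L} (hX : X ∈ grading x) (hY : Y ∈ grading y) :
    iterBrOn br (br X Y) a S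
      = ∑ T ∈ S.powerset, sgn R ((∑ i ∈ T, p i) * y + inversionExp p T (S \ T)) •
          br (iterBrOn br X a T) (iterBrOn br Y a (S \ T)) := by
  induction S using Finset.induction_on_min generalizing X x Y y with
  | empty => simp [inversionExp, sgn_zero]
  | insert m S hm ih =>
    have hmS : m ∉ S := fun h => (hm m h).false
    rw [iterBrOn_insert_of_lt hm, hL.leibniz_right hX hY (ha m), iterBrOn_add, iterBrOn_smul,
      ih (hL.br_mem hX (ha m)) hY, ih hX (hL.br_mem hY (ha m)), sum_powerset_insert hmS,
      smul_sum, add_comm]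
    congr 1 <;> refine sum_congr rfl fun T hT => ?_ <;> have hTS := mem_powerset.mp hT <;>
      have hmT : m ∉ T := fun h => hmS (hTS h)
    · rw [insert_sdiff_of_notMem S hmT, iterBrOn_insert_of_lt fun i hi => hm i (mem_sdiff.mp hi).1,
        inversionExp_insert_right p (fun h => hmS (mem_sdiff.mp h).1) fun j hj => hm j (hTS hj)]
      congr 2
      ring
    · rw [insert_sdiff_insert, sdiff_insert_of_notMem hmS,
        iterBrOn_insert_of_lt fun i hi => hm i (hTS hi),
        inversionExp_insert_left p hmT fun i hi => hm i (mem_sdiff.mp hi).1, sum_insert hmT,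
        smul_smul, ← sgn_add]
      congr 2
      ring

end IsLieSuperBracket

lemma List.ofFn_orderIsoOfFin {α ι : Type*} [LinearOrder ι] (a : ι → α) (S : Finset ι) :
    List.ofFn (fun i : Fin S.card => a (S.orderIsoOfFin rfl i)) = (S.sort (· ≤ ·)).map a := by
  apply List.ext_getElem <;> simp [orderEmbOfFin_apply]

section DerivedBrackets

variable {grading : ZMod 2 → Submodule R L} {br : L →ₗ[R] L →ₗ[R] L} {P : L →ₗ[R] L}
  {ι : Type*} [LinearOrder ι] {p : ι → ZMod 2} {a : ι → L} {Δ : L}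

lemma dbr_eq_iterBrOn_univ (z : L) {n : ℕ} (a : Fin n → L) :
    dbr br P z n a = P (iterBrOn br z a univ) := by
  rw [dbr, iterBrOn, Fin.sort_univ, List.ofFn_eq_map]

lemma dbr_smul (c : R) (z : L) {n : ℕ} (a : Fin n → L) :
    dbr br P (c • z) n a = c • dbr br P z n a := by
  rw [dbr_eq_iterBrOn_univ, dbr_eq_iterBrOn_univ, iterBrOn_smul, map_smul]

variable (br P) in
/-- The summand `{{a_S}_Δ, a_{Sᶜ}}_Δ` of the Jacobiator, without its Koszul sign. -/
def jacobiatorTerm [Fintype ι] (Δ : L) (a : ι → L) (S : Finset ι) : L :=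
  P (iterBrOn br (br Δ (P (iterBrOn br Δ a S))) a Sᶜ)

lemma Jac_dbr_eq_sum {n : ℕ} (p : Fin n → ZMod 2) (a : Fin n → L) :
    Jac R (dbr br P Δ) n p a
      = ∑ S, sgn R (inversionExp p S Sᶜ) • jacobiatorTerm br P Δ a S := by
  refine sum_congr rfl fun S _ => ?_
  rw [dbr, List.ofFn_succ, Fin.cons_zero]
  simp only [Fin.cons_succ]
  rw [List.ofFn_orderIsoOfFin, dbr, List.ofFn_orderIsoOfFin]
  rfl

lemma br_iterBrOn_proj (hL : IsLieSuperBracket grading br)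
    (hP : ∀ (i : ZMod 2) (x : L), x ∈ grading i → P x ∈ grading i)
    (ha : ∀ i, a i ∈ grading (p i)) (hcomm : ∀ i x, br (a i) (P x) = 0)
    (hΔ : Δ ∈ grading 1) (T U : Finset ι) :
    br (iterBrOn br Δ a U) (P (iterBrOn br Δ a T))
      = sgn R ((∑ i ∈ U, p i) * (1 + ∑ i ∈ T, p i)) •
          iterBrOn br (br Δ (P (iterBrOn br Δ a T))) a U := by
  rw [hL.iterBrOn_br_of_br_eq_zero ha (hP _ _ (hL.iterBrOn_mem ha T hΔ)) (fun i => hcomm i _) U hΔ,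
    smul_smul, ← sgn_add, CharTwo.add_self_eq_zero, sgn_zero, one_smul]

lemma smul_proj_br_iterBrOn_compl [Fintype ι] (hL : IsLieSuperBracket grading br)
    (hP : ∀ (i : ZMod 2) (x : L), x ∈ grading i → P x ∈ grading i)
    (hdistrib : ∀ x y : L, P (br x y) = P (br (P x) y) + P (br x (P y)))
    (ha : ∀ i, a i ∈ grading (p i)) (hcomm : ∀ i x, br (a i) (P x) = 0)
    (hΔ : Δ ∈ grading 1) (S : Finset ι) :
    sgn R ((∑ i ∈ S, p i) + inversionExp p S Sᶜ) •
        P (br (iterBrOn br Δ a S) (iterBrOn br Δ a Sᶜ))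
      = sgn R (inversionExp p S Sᶜ) • jacobiatorTerm br P Δ a S
        + sgn R (inversionExp p Sᶜ S) • jacobiatorTerm br P Δ a Sᶜ := by
  have hS := hL.iterBrOn_mem ha S hΔ
  have hSc := hL.iterBrOn_mem ha Sᶜ hΔ
  have hPS : P (br (P (iterBrOn br Δ a S)) (iterBrOn br Δ a Sᶜ))
      = sgn R (∑ i ∈ S, p i) • jacobiatorTerm br P Δ a S := by
    rw [hL.skew (hP _ _ hS) hSc, br_iterBrOn_proj hL hP ha hcomm hΔ S Sᶜ, smul_smul, map_smul,
      jacobiatorTerm, neg_mul, ← sgn_add,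
      show (1 + ∑ i ∈ S, p i) * (1 + ∑ i ∈ Sᶜ, p i) + (∑ i ∈ Sᶜ, p i) * (1 + ∑ i ∈ S, p i)
        = 1 + ∑ i ∈ S, p i by grind, sgn_add, sgn_one, neg_one_mul, neg_neg]
  have hPSc : P (br (iterBrOn br Δ a S) (P (iterBrOn br Δ a Sᶜ)))
      = sgn R ((∑ i ∈ S, p i) * (1 + ∑ i ∈ Sᶜ, p i)) • jacobiatorTerm br P Δ a Sᶜ := by
    rw [br_iterBrOn_proj hL hP ha hcomm hΔ Sᶜ S, map_smul, jacobiatorTerm, compl_compl]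
  have hκ := inversionExp_add_inversionExp_swap p (disjoint_compl_right : Disjoint S Sᶜ)
  rw [hdistrib, hPS, hPSc, smul_add, smul_smul, smul_smul, ← sgn_add, ← sgn_add]
  rw [show ∑ i ∈ S, p i + inversionExp p S Sᶜ + ∑ i ∈ S, p i = inversionExp p S Sᶜ by grind,
    show ∑ i ∈ S, p i + inversionExp p S Sᶜ + (∑ i ∈ S, p i) * (1 + ∑ i ∈ Sᶜ, p i)
      = inversionExp p Sᶜ S by grind]

lemma dbr_br_self_eq_sum (hL : IsLieSuperBracket grading br) {n : ℕ} {p : Fin n → ZMod 2}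
    {a : Fin n → L} (ha : ∀ i, a i ∈ grading (p i)) (hΔ : Δ ∈ grading 1) :
    dbr br P (br Δ Δ) n a
      = ∑ S, sgn R ((∑ i ∈ S, p i) + inversionExp p S Sᶜ) •
          P (br (iterBrOn br Δ a S) (iterBrOn br Δ a Sᶜ)) := by
  rw [dbr_eq_iterBrOn_univ, hL.iterBrOn_br_eq_sum_powerset ha univ hΔ hΔ, powerset_univ, map_sum]
  refine sum_congr rfl fun S _ => ?_
  rw [map_smul, ← compl_eq_univ_sdiff, mul_one]

end DerivedBrackets

theorem jacobiator_of_higher_derived_brackets_general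
    (R : Type*) [CommRing R] [Invertible (2 : R)]
    (L : Type*) [AddCommGroup L] [Module R L]
    (grading : ZMod 2 → Submodule R L)
    (br : L →ₗ[R] L →ₗ[R] L)
    (hgrade : ∀ (i j : ZMod 2) (a b : L), a ∈ grading i → b ∈ grading j →
      br a b ∈ grading (i + j))
    (hskew : ∀ (i j : ZMod 2) (a b : L), a ∈ grading i → b ∈ grading j →
      br a b = (-(sgn R (i * j))) • br b a)
    (hjacobi : ∀ (i j : ZMod 2) (a b c : L), a ∈ grading i → b ∈ grading j →
      br a (br b c) = br (br a b) c + (sgn R (i * j)) • br b (br a c))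
    (P : L →ₗ[R] L)
    (hPparity : ∀ (i : ZMod 2) (x : L), x ∈ grading i → P x ∈ grading i)
    (habelian : ∀ x y : L, br (P x) (P y) = 0)
    (hdistrib : ∀ x y : L, P (br x y) = P (br (P x) y) + P (br x (P y)))
    (Δ : L) (hΔ : Δ ∈ grading 1)
    (n : ℕ) (p : Fin n → ZMod 2) (a : Fin n → L)
    (haV : ∀ i, a i ∈ LinearMap.range P)
    (hahom : ∀ i, a i ∈ grading (p i)) :
    Jac R (dbr br P Δ) n p a = dbr br P ((⅟(2 : R)) • br Δ Δ) n a := by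
  have hL : IsLieSuperBracket grading br :=
    ⟨hgrade _ _ _ _, hskew _ _ _ _, fun c => hjacobi _ _ _ _ c⟩
  have hcomm : ∀ i x, br (a i) (P x) = 0 := fun i x => by
    obtain ⟨y, hy⟩ := haV i
    rw [← hy, habelian]
  have hcompl := Equiv.sum_comp (compl_involutive.toPerm _)
    fun S : Finset (Fin n) => sgn R (inversionExp p S Sᶜ) • jacobiatorTerm br P Δ a S
  simp only [Function.Involutive.coe_toPerm, compl_compl] at hcompl
  rw [dbr_smul, dbr_br_self_eq_sum hL hahom hΔ,
    sum_congr rfl fun S _ => smul_proj_br_iterBrOn_compl hL hPparity hdistrib hahom hcomm hΔ S,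
    sum_add_distrib, hcompl, ← two_smul R, invOf_smul_smul, Jac_dbr_eq_sum]

/-- Let `L` be a Lie superalgebra over `R` (with `2` invertible),
`P` an `R`-linear parity-preserving projector whose image is an abelian subalgebra and
which satisfies the distributive law, and `Δ ∈ L` odd.  Then for every `n ≥ 0` and all
homogeneous `a₁,…,aₙ` in `V = P(L)`,
`Jⁿ_Δ(a₁,…,aₙ) = {a₁,…,aₙ}_{Δ²}` where `Δ² = (1/2)[Δ,Δ]`. -/
theorem jacobiator_of_higher_derived_brackets
    (R : Type*) [CommRing R] [Invertible (2 : R)]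
    (L : Type*) [AddCommGroup L] [Module R L]
    (grading : ZMod 2 → Submodule R L)
    (hdirect : DirectSum.IsInternal grading)
    (br : L →ₗ[R] L →ₗ[R] L)
    (hgrade : ∀ (i j : ZMod 2) (a b : L), a ∈ grading i → b ∈ grading j →
      br a b ∈ grading (i + j))
    (hskew : ∀ (i j : ZMod 2) (a b : L), a ∈ grading i → b ∈ grading j →
      br a b = (-(sgn R (i * j))) • br b a)
    (hjacobi : ∀ (i j : ZMod 2) (a b c : L), a ∈ grading i → b ∈ grading j →
      br a (br b c) = br (br a b) c + (sgn R (i * j)) • br b (br a c))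
    (P : L →ₗ[R] L) (hproj : ∀ x, P (P x) = P x)
    (hPparity : ∀ (i : ZMod 2) (x : L), x ∈ grading i → P x ∈ grading i)
    (habelian : ∀ x y : L, br (P x) (P y) = 0)
    (hdistrib : ∀ x y : L, P (br x y) = P (br (P x) y) + P (br x (P y)))
    (Δ : L) (hΔ : Δ ∈ grading 1)
    (n : ℕ) (p : Fin n → ZMod 2) (a : Fin n → L)
    (haV : ∀ i, a i ∈ LinearMap.range P)
    (hahom : ∀ i, a i ∈ grading (p i)) :
    Jac R (dbr br P Δ) n p a = dbr br P ((⅟(2 : R)) • br Δ Δ) n a :=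
  jacobiator_of_higher_derived_brackets_general R L grading br hgrade hskew hjacobi P hPparity
    habelian hdistrib Δ hΔ n p a haV hahom
end

section
/- Let A be a commutative associative unital algebra over a commutative ring R and Δ ∈ End(A). Define the higher derived brackets {f₁,…,fₙ}_Δ := ([…[[Δ, L_{f₁}], L_{f₂}],…, L_{fₙ}])(1) for f₁,…,fₙ ∈ A, where the brackets are commutators in End(A). Then the (n+1)-th bracket measures the failure of the Leibniz rule for the n-th bracket: for all f₁,…,f_{n−1}, g, h ∈ A, {f₁,…,f_{n−1}, g·h}_Δ = {f₁,…,f_{n−1}, g}_Δ·h + {f₁,…,f_{n−1}, h}_Δ·g + {f₁,…,f_{n−1}, g, h}_Δ. -/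
/-- Iterated commutator `[...[[Δ, L_{f₁}], L_{f₂}],..., L_{fₙ}]` of an endomorphism `Δ`
of a commutative algebra `A` with the multiplication operators `L_{fᵢ}`. -/
def iterC (R : Type*) [CommRing R] (A : Type*) [CommRing A] [Algebra R A] :
    Module.End R A → List A → Module.End R A
  | Δ, [] => Δ
  | Δ, f :: rest =>
      iterC R A (Δ * LinearMap.mulLeft R f - LinearMap.mulLeft R f * Δ) rest

theorem iterC_append (R : Type*) [CommRing R] (A : Type*) [CommRing A] [Algebra R A]
    (Δ : Module.End R A) (l₁ l₂ : List A) :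
    iterC R A Δ (l₁ ++ l₂) = iterC R A (iterC R A Δ l₁) l₂ := by
  induction l₁ generalizing Δ with
  | nil => rfl
  | cons f rest ih => simp [iterC, ih]

/-- For `Δ ∈ End(A)` and the higher derived brackets
`{f₁,…,fₙ}_Δ := ([…[[Δ, L_{f₁}], L_{f₂}],…, L_{fₙ}])(1)` on a commutative associative
unital algebra `A`, the `(n+1)`-th bracket measures the failure of the Leibniz rule of
the `n`-th bracket:
`{f₁,…,f_{n−1}, g·h}_Δ = {f₁,…,f_{n−1}, g}_Δ·h + {f₁,…,f_{n−1}, h}_Δ·g + {f₁,…,f_{n−1}, g, h}_Δ`. -/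
theorem derived_bracket_leibniz_failure
    (R : Type*) [CommRing R] (A : Type*) [CommRing A] [Algebra R A]
    (Δ : Module.End R A) (fs : List A) (g h : A) :
    (iterC R A Δ (fs ++ [g * h])) 1 =
      (iterC R A Δ (fs ++ [g])) 1 * h + (iterC R A Δ (fs ++ [h])) 1 * g +
        (iterC R A Δ (fs ++ [g, h])) 1 := by
  rw [iterC_append, iterC_append, iterC_append, iterC_append]
  set D := iterC R A Δ fs
  simp only [iterC, LinearMap.sub_apply, Module.End.mul_apply, LinearMap.mulLeft_apply,
    map_sub, map_mul, mul_one]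
  ring
end
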